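/- Let σ be a permutation of {1,…,m} with disjoint cycle decomposition (i(1,1),…,i(1,e₁))⋯(i(n,1),…,i(n,eₙ)), let V be a finite-dimensional vector space, and A₁,…,Aₘ ∈ End(V). Let H : V^⊗m → V^⊗m be the map sending v₁ ⊗ ⋯ ⊗ vₘ to the tensor whose σ(i)-th factor is A_i(v_i). Then tr(H) = Π_{t=1}^n tr(A_{i(t,e_t)} ⋯ A_{i(t,1)}). -/

import Mathlib

/-!
In a basis `b` of `V` the tensors `b (k 1) ⊗ ⋯ ⊗ b (k m)` form a basis of `V^⊗m`, and the
diagonal entry of `H` at `k` is `∏ᵢ (Aᵢ)_{k(σ i), k i}`. Since `σ` maps each cycle onto itself,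
this product splits along the cycles, and summing over `k` factors into one sum per cycle. For a
cycle `(i₁ … iₑ)` that sum runs over the closed index paths `c` with weights
`∏ₗ (A_{iₗ})_{c(ℓ+1), c ℓ}`, which is exactly `tr(A_{iₑ} ⋯ A_{i₁})` expanded in coordinates.
-/

open scoped TensorProduct
open Finset

theorem Fin.val_finRotate {n : ℕ} (i : Fin n) : (finRotate n i : ℕ) = (i + 1) % n := by
  cases n with
  | zero => exact i.elim0
  | succ n => rw [finRotate_apply, Fin.val_add, Fin.val_one', Nat.add_mod_mod]

theorem Fin.sum_fun_snoc {n : ℕ} {ι M : Type*} [Fintype ι] [AddCommMonoid M]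
    (f : (Fin (n + 1) → ι) → M) :
    ∑ c, f c = ∑ x, ∑ c, f (Fin.snoc c x) := by
  rw [← (Fin.snocEquiv fun _ => ι).sum_comp, Fintype.sum_prod_type]
  rfl

theorem Fin.snoc_apply_zero_succ {n : ℕ} {ι : Type*} (c : Fin (n + 1) → ι) (ℓ : Fin (n + 1)) :
    Fin.snoc (α := fun _ => ι) c (c 0) ℓ.succ = c (finRotate (n + 1) ℓ) := by
  induction ℓ using Fin.lastCases with
  | last => simp
  | cast j => rw [Fin.succ_castSucc, Fin.snoc_castSucc, finRotate_apply, Fin.coeSucc_eq_succ]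

namespace Matrix

variable {ι R : Type*} [Fintype ι] [DecidableEq ι] [CommSemiring R]

theorem list_ofFn_reverse_prod_apply {n : ℕ} (B : Fin n → Matrix ι ι R) (p q : ι) :
    (List.ofFn B).reverse.prod p q =
      ∑ c : Fin (n + 1) → ι,
        if c (Fin.last n) = p ∧ c 0 = q then ∏ ℓ, B ℓ (c ℓ.succ) (c ℓ.castSucc) else 0 := by
  induction n generalizing p with
  | zero =>
    rw [← (Equiv.funUnique (Fin 1) ι).symm.sum_comp]
    simp [one_apply, ite_and, eq_comm]
  | succ n ih =>
    rw [List.ofFn_succ', List.concat_eq_append, List.reverse_append, List.reverse_singleton,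
      List.singleton_append, List.prod_cons, mul_apply, Fin.sum_fun_snoc]
    simp only [ih, mul_sum, Fin.prod_univ_castSucc, Fin.snoc_last, Fin.succ_last,
      Fin.snoc_apply_zero, Fin.succ_castSucc, Fin.snoc_castSucc, ite_and]
    rw [sum_comm]
    conv_rhs => rw [sum_comm]
    refine sum_congr rfl fun c _ => ?_
    simp only [mul_ite, mul_zero, sum_ite_eq, sum_ite_eq', mem_univ, if_true]
    split_ifs <;> ring

theorem trace_list_ofFn_reverse_prod {n : ℕ} [NeZero n] (B : Fin n → Matrix ι ι R) :
    trace (List.ofFn B).reverse.prod =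
      ∑ c : Fin n → ι, ∏ ℓ, B ℓ (c (finRotate n ℓ)) (c ℓ) := by
  obtain ⟨n, rfl⟩ := Nat.exists_eq_succ_of_ne_zero (NeZero.ne n)
  simp only [trace, diag, list_ofFn_reverse_prod_apply, ite_and]
  rw [sum_comm]
  simp only [sum_ite_eq, mem_univ, if_true]
  -- a closed path of length `n + 1` is a tuple `c : Fin (n + 1) → ι` followed by `c 0`
  rw [Fin.sum_fun_snoc, sum_comm]
  simp only [Fin.snoc_last, Fin.snoc_apply_zero, sum_ite_eq, mem_univ, if_true,
    Fin.snoc_apply_zero_succ, Fin.snoc_castSucc]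

end Matrix

section Trace

variable {R M ι : Type*} [CommRing R] [AddCommGroup M] [Module R M] [Fintype ι] [DecidableEq ι]

theorem LinearMap.trace_list_ofFn_reverse_prod {n : ℕ} [NeZero n] (b : Module.Basis ι R M)
    (f : Fin n → Module.End R M) :
    LinearMap.trace R M (List.ofFn f).reverse.prod =
      ∑ c : Fin n → ι, ∏ ℓ, LinearMap.toMatrix b b (f ℓ) (c (finRotate n ℓ)) (c ℓ) := by
  rw [LinearMap.trace_eq_matrix_trace R b]
  change Matrix.trace (LinearMap.toMatrixAlgEquiv b _) = _
  rw [map_list_prod, List.map_reverse, List.map_ofFn, Matrix.trace_list_ofFn_reverse_prod]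
  rfl

theorem LinearMap.trace_reindex_comp_piTensorProductMap {α : Type*} [Fintype α] [DecidableEq α]
    (b : Module.Basis ι R M) (σ : Equiv.Perm α) (A : α → Module.End R M) :
    LinearMap.trace R (⨂[R] _ : α, M)
        ((PiTensorProduct.reindex R (fun _ : α => M) σ).toLinearMap ∘ₗ PiTensorProduct.map A) =
      ∑ k : α → ι, ∏ i, LinearMap.toMatrix b b (A i) (k (σ i)) (k i) := by
  rw [LinearMap.trace_eq_matrix_trace R (Basis.piTensorProduct fun _ => b), Matrix.trace]
  refine sum_congr rfl fun k _ => ?_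
  simp only [Matrix.diag_apply, LinearMap.toMatrix_apply, Basis.piTensorProduct_apply,
    LinearMap.coe_comp, Function.comp_apply, LinearEquiv.coe_coe, PiTensorProduct.map_tprod,
    PiTensorProduct.reindex_tprod, Basis.piTensorProduct_repr_tprod_apply]
  exact (Equiv.prod_comp σ _).symm.trans (by simp)

end Trace

theorem Fintype.sum_prod_perm_eq_prod_sum_cycles {S α ι τ : Type*} [CommSemiring S]
    [Fintype α] [DecidableEq α] [Fintype ι] [Fintype τ] [DecidableEq τ]
    {κ : τ → Type*} [∀ t, Fintype (κ t)] [∀ t, DecidableEq (κ t)]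
    (σ : Equiv.Perm α) (g : (Σ t, κ t) ≃ α) (ρ : ∀ t, κ t → κ t)
    (hσ : ∀ t ℓ, σ (g ⟨t, ℓ⟩) = g ⟨t, ρ t ℓ⟩) (w : α → ι → ι → S) :
    ∑ k : α → ι, ∏ i, w i (k (σ i)) (k i) =
      ∏ t, ∑ c : κ t → ι, ∏ ℓ, w (g ⟨t, ℓ⟩) (c (ρ t ℓ)) (c ℓ) := by
  let E : (∀ t, κ t → ι) ≃ (α → ι) :=
    (Equiv.piCurry fun _ _ => ι).symm.trans (g.arrowCongr (Equiv.refl ι))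
  have hE (K : ∀ t, κ t → ι) (s : Σ t, κ t) : E K (g s) = K s.1 s.2 := by
    simp [E]
    rfl
  rw [Fintype.prod_sum, ← E.sum_comp]
  refine Finset.sum_congr rfl fun K _ => ?_
  rw [← g.prod_comp, Fintype.prod_sigma]
  simp only [hσ, hE]

/-- If `σ` is a permutation of `{1,…,m}` with disjoint cycle decomposition
`(i(1,1),…,i(1,e₁)) ⋯ (i(n,1),…,i(n,eₙ))` (encoded by a bijection
`g : (Σ t, Fin (e t)) ≃ Fin m` with `σ (g ⟨t,ℓ⟩) = g ⟨t,ℓ+1⟩` cyclically), then the trace of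
the endomorphism of `V^⊗m` sending `v₁ ⊗ ⋯ ⊗ vₘ` to the tensor whose `σ(i)`-th factor is
`Aᵢ(vᵢ)` equals `Π_t tr(A_{i(t,e_t)} ⋯ A_{i(t,1)})`. -/
theorem trace_perm_tensor_endomorphism
    (F : Type) [Field F] (V : Type) [AddCommGroup V] [Module F V] [FiniteDimensional F V]
    (m n : ℕ) (A : Fin m → Module.End F V)
    (σ : Equiv.Perm (Fin m)) (e : Fin n → ℕ) (he : ∀ t, 0 < e t)
    (g : (Σ t : Fin n, Fin (e t)) ≃ Fin m)
    (hσ : ∀ (t : Fin n) (ℓ : Fin (e t)),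
      σ (g ⟨t, ℓ⟩) = g ⟨t, ⟨(ℓ.val + 1) % e t, Nat.mod_lt _ (he t)⟩⟩) :
    LinearMap.trace F (⨂[F] _ : Fin m, V)
        ((PiTensorProduct.reindex F (fun _ : Fin m => V) σ).toLinearMap ∘ₗ
          PiTensorProduct.map A) =
      ∏ t : Fin n,
        LinearMap.trace F V
          ((List.ofFn fun ℓ : Fin (e t) => A (g ⟨t, ℓ⟩)).reverse.prod) := by
  have : ∀ t, NeZero (e t) := fun t => ⟨(he t).ne'⟩
  let b := Module.finBasis F V
  have hcycle (t : Fin n) (ℓ : Fin (e t)) : σ (g ⟨t, ℓ⟩) = g ⟨t, finRotate (e t) ℓ⟩ := by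
    simp_rw [hσ, ← Fin.val_finRotate]
  rw [LinearMap.trace_reindex_comp_piTensorProductMap b,
    Fintype.sum_prod_perm_eq_prod_sum_cycles σ g (fun t => finRotate (e t)) hcycle
      fun i => LinearMap.toMatrix b b (A i)]
  simp only [LinearMap.trace_list_ofFn_reverse_prod b]
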